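/- Let f ∈ H²(𝔻) and let (z_j)_{j≥1} be a sequence of distinct points of 𝔻 that is a uniqueness set of H²(𝔻), i.e. every g ∈ H²(𝔻) with g(z_j) = 0 for all j ≥ 1 is identically zero. Then for every n the Gram matrix A_n with entries a_{j,k} = 1/(1 − z̄_k z_j) (1 ≤ j, k ≤ n) is positive definite, and the functions f*_{A_n}(z) = Σ_{j=1}^n Σ_{k=1}^n f(z_j) ã_{j,k} K_S(z, z̄_k), where ã_{j,k} are the entries of the conjugate of A_n^{-1}, converge to f in the norm of H²(𝔻) as n → ∞. -/

import Mathlib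

open scoped ComplexOrder

/-- Taylor coefficient of a function `f : ℂ → ℂ` at the origin. -/
noncomputable def hcoeff (f : ℂ → ℂ) (n : ℕ) : ℂ :=
  iteratedDeriv n f 0 / (n.factorial : ℂ)

/-- The squared Hardy space `H²(𝔻)` norm, computed through Taylor coefficients:
`‖f‖² = ∑ |aₙ|²`. -/
noncomputable def hnormSq (f : ℂ → ℂ) : ℝ :=
  ∑' n : ℕ, ‖hcoeff f n‖ ^ 2

/-- Membership in the Hardy space `H²(𝔻)`: `f` is the sum of its Taylor series on the open
unit disc and its Taylor coefficients are square-summable. -/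
def MemHardy (f : ℂ → ℂ) : Prop :=
  (∀ z ∈ Metric.ball (0 : ℂ) 1, HasSum (fun n => hcoeff f n * z ^ n) (f z)) ∧
    Summable fun n => ‖hcoeff f n‖ ^ 2

/-- The Szegő kernel `K_S(·, w̄) : z ↦ 1/(1 − w̄ z)`. -/
noncomputable def szego (w : ℂ) : ℂ → ℂ := fun z => (1 - (starRingEnd ℂ) w * z)⁻¹

/-!
Taylor coefficients identify `H²(𝔻)` with `ℓ²(ℕ)`, and the Szegő kernel at `u` becomes the
vector `(ūⁿ)ₙ`, whose inner product with `f` is `f u`. Distinct points give linearly independent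
kernel vectors (Dedekind's independence of the characters `n ↦ ūⁿ`), so `A n` is the Gram matrix
of independent vectors and hence positive definite. The Aveiro approximant is then the orthogonal
projection of `f` onto the span of the first `n` kernels, and the uniqueness hypothesis says that
only `0` is orthogonal to all kernels, so these projections converge to `f`.
-/

open scoped lp InnerProductSpace ComplexConjugate ENNReal
open Filter Topology Submodule Matrix

section Projection

variable {𝕜 E ι : Type*} [RCLike 𝕜] [NormedAddCommGroup E] [InnerProductSpace 𝕜 E]

instance finiteDimensional_span_range [Finite ι] (v : ι → E) :
    FiniteDimensional 𝕜 (span 𝕜 (Set.range v)) :=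
  FiniteDimensional.span_of_finite 𝕜 (Set.finite_range v)

theorem mem_orthogonal_span_range_iff {v : ι → E} {x : E} :
    x ∈ (span 𝕜 (Set.range v))ᗮ ↔ ∀ i, ⟪v i, x⟫_𝕜 = 0 := by
  refine ⟨fun hx i => inner_right_of_mem_orthogonal (subset_span (Set.mem_range_self i)) hx,
    fun h => ?_⟩
  refine (mem_orthogonal _ x).2 fun u hu => ?_
  induction hu using span_induction with
  | mem _ hu => obtain ⟨i, rfl⟩ := hu; exact h i
  | zero => exact inner_zero_left x
  | add _ _ _ _ h₁ h₂ => rw [inner_add_left, h₁, h₂, add_zero]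
  | smul c _ _ h => rw [inner_smul_left, h, mul_zero]

theorem starProjection_span_range_eq_sum [Fintype ι] [DecidableEq ι] {v : ι → E}
    (hv : LinearIndependent 𝕜 v) (x : E) :
    (span 𝕜 (Set.range v)).starProjection x =
      ∑ j, ∑ k, (⟪v j, x⟫_𝕜 * conj ((gram 𝕜 v)⁻¹ j k)) • v k := by
  have hG : IsUnit (gram 𝕜 v).det := (det_gram_ne_zero_iff_linearIndependent.2 hv).isUnit
  have hGinv : ∀ j k, conj ((gram 𝕜 v)⁻¹ j k) = (gram 𝕜 v)⁻¹ k j := fun j k =>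
    congrFun₂ (isHermitian_gram 𝕜 v).inv k j
  refine eq_starProjection_of_mem_orthogonal
    (sum_mem fun j _ => sum_mem fun k _ => smul_mem _ _ (subset_span ⟨k, rfl⟩)) ?_
  refine mem_orthogonal_span_range_iff.2 fun i => ?_
  rw [inner_sub_right, sub_eq_zero]
  symm
  calc ⟪v i, ∑ j, ∑ k, (⟪v j, x⟫_𝕜 * conj ((gram 𝕜 v)⁻¹ j k)) • v k⟫_𝕜
      = ∑ j, ⟪v j, x⟫_𝕜 * (gram 𝕜 v * (gram 𝕜 v)⁻¹) i j := by
        simp only [inner_sum, inner_smul_right, hGinv, mul_apply, gram_apply, Finset.mul_sum]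
        exact Finset.sum_congr rfl fun j _ => Finset.sum_congr rfl fun k _ => by ring
    _ = ⟪v i, x⟫_𝕜 := by simp [mul_nonsing_inv _ hG, one_apply]

theorem tendsto_starProjection_span_range_fin [CompleteSpace E] {v : ℕ → E}
    (hv : ∀ y, (∀ j, ⟪v j, y⟫_𝕜 = 0) → y = 0) (x : E) :
    Tendsto (fun n => (span 𝕜 (Set.range fun j : Fin n => v j)).starProjection x)
      atTop (𝓝 x) := by
  refine starProjection_tendsto_self _ (fun m n hmn => span_mono ?_) x ?_
  · rintro _ ⟨j, rfl⟩
    exact ⟨Fin.castLE hmn j, rfl⟩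
  · rw [top_le_iff, topologicalClosure_eq_top_iff, eq_bot_iff]
    refine fun y hy => hv y fun j => inner_right_of_mem_orthogonal ?_ hy
    exact mem_iSup_of_mem (j + 1) (subset_span ⟨⟨j, j.lt_succ_self⟩, rfl⟩)

end Projection

section LpTwo

variable {ι E : Type*} [NormedAddCommGroup E]

theorem memℓp_two_iff {a : ι → E} : Memℓp a 2 ↔ Summable fun i => ‖a i‖ ^ 2 := by
  simp [memℓp_gen_iff (show 0 < (2 : ℝ≥0∞).toReal by norm_num)]

theorem lp.norm_sq_eq_tsum (y : lp (fun _ : ι => E) 2) : ‖y‖ ^ 2 = ∑' i, ‖y i‖ ^ 2 := by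
  simpa using lp.norm_rpow_eq_tsum (show 0 < (2 : ℝ≥0∞).toReal by norm_num) y

end LpTwo

def HasPowerSeriesOnDisc (g : ℂ → ℂ) (a : ℕ → ℂ) : Prop :=
  ∀ w ∈ Metric.ball (0 : ℂ) 1, HasSum (fun n => a n * w ^ n) (g w)

namespace HasPowerSeriesOnDisc

variable {g h : ℂ → ℂ} {a b : ℕ → ℂ}

theorem hasFPowerSeriesOnBall (hg : HasPowerSeriesOnDisc g a) :
    HasFPowerSeriesOnBall g (FormalMultilinearSeries.ofScalars ℂ a) 0 1 := by
  have hp : ∀ n (w : ℂ), FormalMultilinearSeries.ofScalars ℂ a n (fun _ => w) = a n * w ^ n :=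
    fun n w => by rw [FormalMultilinearSeries.ofScalars_apply_eq, smul_eq_mul]
  refine
    { r_le := ENNReal.le_of_forall_nnreal_lt fun r hr => ?_
      r_pos := one_pos
      hasSum := fun {w} hw => ?_ }
  · have hr' : ((r : ℝ) : ℂ) ∈ Metric.ball (0 : ℂ) 1 := by simpa using hr
    refine FormalMultilinearSeries.le_radius_of_summable _
      ((hg _ hr').summable.norm.congr fun n => ?_)
    simp
  · simp only [hp, zero_add]
    exact hg w (by simpa [← ofReal_norm] using hw)

theorem hcoeff_eq (hg : HasPowerSeriesOnDisc g a) : hcoeff g = a := by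
  ext n
  have h := hg.hasFPowerSeriesOnBall.factorial_smul 1 n
  simp only [FormalMultilinearSeries.ofScalars_apply_eq, one_pow, smul_eq_mul, mul_one,
    ← iteratedDeriv_eq_iteratedFDeriv] at h
  rw [hcoeff, ← h, nsmul_eq_mul, mul_div_cancel_left₀ _ (by exact_mod_cast n.factorial_ne_zero)]

theorem memHardy (hg : HasPowerSeriesOnDisc g a) (ha : Summable fun n => ‖a n‖ ^ 2) :
    MemHardy g := by
  rw [MemHardy, hg.hcoeff_eq]
  exact ⟨hg, ha⟩

theorem hnormSq_eq (hg : HasPowerSeriesOnDisc g a) {y : ℓ²(ℕ, ℂ)} (hy : ⇑y = a) :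
    hnormSq g = ‖y‖ ^ 2 := by
  rw [hnormSq, hg.hcoeff_eq, lp.norm_sq_eq_tsum, hy]

theorem sub (hg : HasPowerSeriesOnDisc g a) (hh : HasPowerSeriesOnDisc h b) :
    HasPowerSeriesOnDisc (fun w => g w - h w) (a - b) := fun w hw => by
  simpa only [Pi.sub_apply, sub_mul] using (hg w hw).sub (hh w hw)

theorem const_mul (hg : HasPowerSeriesOnDisc g a) (c : ℂ) :
    HasPowerSeriesOnDisc (fun w => c * g w) (fun n => c * a n) := fun w hw => by
  simpa only [mul_assoc] using (hg w hw).mul_left c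

theorem sum {κ : Type*} (s : Finset κ) {g : κ → ℂ → ℂ} {a : κ → ℕ → ℂ}
    (hg : ∀ i ∈ s, HasPowerSeriesOnDisc (g i) (a i)) :
    HasPowerSeriesOnDisc (fun w => ∑ i ∈ s, g i w) (fun n => ∑ i ∈ s, a i n) := fun w hw => by
  simpa only [Finset.sum_mul] using hasSum_sum fun i hi => hg i hi w hw

end HasPowerSeriesOnDisc

theorem MemHardy.hasPowerSeriesOnDisc {f : ℂ → ℂ} (hf : MemHardy f) :
    HasPowerSeriesOnDisc f (hcoeff f) :=
  hf.1

theorem hasPowerSeriesOnDisc_szego {u : ℂ} (hu : ‖u‖ ≤ 1) :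
    HasPowerSeriesOnDisc (szego u) fun n => conj u ^ n := fun w hw => by
  rw [szego]
  have huw : ‖conj u * w‖ < 1 := by
    rw [norm_mul, RCLike.norm_conj]
    exact mul_lt_one_of_nonneg_of_lt_one_right hu (norm_nonneg w) (mem_ball_zero_iff.1 hw)
  simpa only [mul_pow] using hasSum_geometric_of_norm_lt_one huw

theorem linearIndependent_pow_seq (L : Type*) [CommRing L] [IsDomain L] :
    LinearIndependent L fun c : L => fun n : ℕ => c ^ n := by
  have h := (linearIndependent_monoidHom (Multiplicative ℕ) L).comp _ (powersHom L).injective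
  exact h.map' (LinearMap.funLeft L L Multiplicative.ofAdd) (LinearMap.ker_eq_bot.2
    (LinearMap.funLeft_injective_of_surjective _ _ _ Multiplicative.ofAdd.surjective))

theorem summable_norm_conj_pow_sq {u : ℂ} (hu : ‖u‖ < 1) :
    Summable fun n : ℕ => ‖conj u ^ n‖ ^ 2 := by
  refine (summable_geometric_of_lt_one (by positivity)
    (pow_lt_one₀ (norm_nonneg u) hu two_ne_zero)).congr fun n => ?_
  rw [norm_pow, RCLike.norm_conj, ← pow_mul, ← pow_mul, mul_comm]

noncomputable def szegoVec (u : ℂ) (hu : ‖u‖ < 1) : ℓ²(ℕ, ℂ) :=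
  ⟨fun n => conj u ^ n, memℓp_two_iff.2 (summable_norm_conj_pow_sq hu)⟩

theorem szegoVec_apply {u : ℂ} (hu : ‖u‖ < 1) (n : ℕ) : szegoVec u hu n = conj u ^ n :=
  rfl

theorem hasSum_inner_szegoVec {u : ℂ} (hu : ‖u‖ < 1) (y : ℓ²(ℕ, ℂ)) :
    HasSum (fun n => y n * u ^ n) ⟪szegoVec u hu, y⟫_ℂ := by
  simpa [szegoVec_apply, mul_comm] using lp.hasSum_inner (𝕜 := ℂ) (szegoVec u hu) y

theorem inner_szegoVec_szegoVec {u v : ℂ} (hu : ‖u‖ < 1) (hv : ‖v‖ < 1) :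
    ⟪szegoVec u hu, szegoVec v hv⟫_ℂ = (1 - conj v * u)⁻¹ :=
  (hasSum_inner_szegoVec hu _).unique
    (hasPowerSeriesOnDisc_szego hv.le u (mem_ball_zero_iff.2 hu))

theorem linearIndependent_szegoVec {ι : Type*} {d : ι → ℂ} (hd : Function.Injective d)
    (hd' : ∀ i, ‖d i‖ < 1) : LinearIndependent ℂ fun i => szegoVec (d i) (hd' i) :=
  LinearIndependent.of_comp (lpSubmodule ℂ (fun _ : ℕ => ℂ) 2).subtype
    ((linearIndependent_pow_seq ℂ).comp _ ((starRingEnd ℂ).injective.comp hd))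

noncomputable def MemHardy.toLp {f : ℂ → ℂ} (hf : MemHardy f) : ℓ²(ℕ, ℂ) :=
  ⟨hcoeff f, memℓp_two_iff.2 hf.2⟩

theorem MemHardy.inner_szegoVec_toLp {f : ℂ → ℂ} (hf : MemHardy f) {u : ℂ} (hu : ‖u‖ < 1) :
    ⟪szegoVec u hu, hf.toLp⟫_ℂ = f u :=
  (hasSum_inner_szegoVec hu hf.toLp).unique (hf.1 u (mem_ball_zero_iff.2 hu))

theorem MemHardy.hnormSq_sub_sum_sum_szego {f : ℂ → ℂ} (hf : MemHardy f) {ι κ : Type*}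
    (s : Finset ι) (t : Finset κ) (c : ι → κ → ℂ) {u : κ → ℂ} (hu : ∀ k, ‖u k‖ < 1) :
    hnormSq (fun w => f w - ∑ j ∈ s, ∑ k ∈ t, c j k * szego (u k) w) =
      ‖hf.toLp - ∑ j ∈ s, ∑ k ∈ t, c j k • szegoVec (u k) (hu k)‖ ^ 2 := by
  have hser := hf.hasPowerSeriesOnDisc.sub (HasPowerSeriesOnDisc.sum s fun j _ =>
    HasPowerSeriesOnDisc.sum t fun k _ => (hasPowerSeriesOnDisc_szego (hu k).le).const_mul (c j k))
  refine hser.hnormSq_eq (funext fun m => ?_)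
  simp only [lp.coeFn_sub, lp.coeFn_sum, lp.coeFn_smul, Pi.sub_apply, Finset.sum_apply,
    Pi.smul_apply, smul_eq_mul]
  rfl

theorem eq_zero_of_forall_inner_szegoVec_eq_zero {ι : Type*} {z : ι → ℂ}
    (hz : ∀ j, ‖z j‖ < 1)
    (huniq : ∀ g : ℂ → ℂ, MemHardy g → (∀ j, g (z j) = 0) →
      ∀ w ∈ Metric.ball (0 : ℂ) 1, g w = 0)
    {y : ℓ²(ℕ, ℂ)} (hy : ∀ j, ⟪szegoVec (z j) (hz j), y⟫_ℂ = 0) : y = 0 := by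
  set g : ℂ → ℂ := fun w => ∑' n, y n * w ^ n
  have hg : HasPowerSeriesOnDisc g y := fun w hw =>
    (hasSum_inner_szegoVec (mem_ball_zero_iff.1 hw) y).summable.hasSum
  have hgz : ∀ j, g (z j) = 0 := fun j => by
    rw [← hy j]
    exact (hasSum_inner_szegoVec (hz j) y).tsum_eq
  have hg0 : HasPowerSeriesOnDisc g 0 := fun w hw => by
    simp [huniq g (hg.memHardy (memℓp_two_iff.1 y.2)) hgz w hw]
  ext n
  simpa using congrFun (hg.hcoeff_eq.symm.trans hg0.hcoeff_eq) n

theorem stmt10 (f : ℂ → ℂ) (hf : MemHardy f)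
    (z : ℕ → ℂ) (hz : ∀ j, ‖z j‖ < 1) (hinj : Function.Injective z)
    (huniq : ∀ g : ℂ → ℂ, MemHardy g → (∀ j, g (z j) = 0) →
      ∀ w ∈ Metric.ball (0 : ℂ) 1, g w = 0)
    (A : (n : ℕ) → Matrix (Fin n) (Fin n) ℂ)
    (hA : ∀ n (j k : Fin n), A n j k = (1 - (starRingEnd ℂ) (z k) * z j)⁻¹) :
    (∀ n, (A n).PosDef) ∧
    Filter.Tendsto
      (fun n : ℕ => hnormSq (fun w =>
        f w - ∑ j : Fin n, ∑ k : Fin n,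
          f (z j) * (starRingEnd ℂ) ((A n)⁻¹ j k) * szego (z k) w))
      Filter.atTop (nhds 0) := by
  set K : ℕ → ℓ²(ℕ, ℂ) := fun j => szegoVec (z j) (hz j)
  have hgram : ∀ n, A n = gram ℂ fun j : Fin n => K j := fun n => by
    ext j k
    rw [hA, gram_apply, inner_szegoVec_szegoVec]
  have hli : ∀ n, LinearIndependent ℂ fun j : Fin n => K j := fun n =>
    (linearIndependent_szegoVec hinj hz).comp _ Fin.val_injective
  refine ⟨fun n => hgram n ▸ posDef_gram_of_linearIndependent (hli n), ?_⟩
  have hnorm : ∀ n, hnormSq (fun w => f w - ∑ j : Fin n, ∑ k : Fin n,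
      f (z j) * (starRingEnd ℂ) ((A n)⁻¹ j k) * szego (z k) w) =
      ‖hf.toLp - (span ℂ (Set.range fun j : Fin n => K j)).starProjection hf.toLp‖ ^ 2 :=
    fun n => by
      rw [starProjection_span_range_eq_sum (hli n), ← hgram n,
        hf.hnormSq_sub_sum_sum_szego _ _ _ (u := fun k : Fin n => z k) fun k => hz k]
      simp only [K, hf.inner_szegoVec_toLp]
  have hlim := tendsto_starProjection_span_range_fin
    (fun y hy => eq_zero_of_forall_inner_szegoVec_eq_zero hz huniq hy) hf.toLp
  simp only [hnorm]
  simpa using (hlim.const_sub hf.toLp).norm.pow 2
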